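/- arXiv:2307.13257 — 4 statements merged into one kernel-verified Lean document; each statement's English description precedes it below -/
import Mathlib

section
/- For every n ≥ 1 and d ≥ 1, there exists a multiset of exactly n affine hyperplanes in ℝ^d covering every point of T_d(n) at least once; consequently the minimum size of a cover of T_d(n) is exactly n. -/
open scoped Classical

/-- The triangular grid `T_d(n)`. -/
def TriGrid (d n : ℕ) : Set (Fin d → ℤ) :=
  {x | (∀ i, 0 ≤ x i) ∧ (∑ i, x i) ≤ (n : ℤ) - 1}

/-- Cast an integer point to a real point. -/
def toReal {d : ℕ} (x : Fin d → ℤ) : Fin d → ℝ := fun i => (x i : ℝ)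

/-- Number of hyperplanes (with multiplicity) of the multiset `C` passing through `p`.
A hyperplane is encoded as a pair `(a, b)` with `a ≠ 0`, representing `{p | ∑ i, a i * p i = b}`. -/
noncomputable def hypCount (d : ℕ) (C : Multiset ((Fin d → ℝ) × ℝ)) (p : Fin d → ℝ) : ℕ :=
  Multiset.countP (fun H => ∑ i, H.1 i * p i = H.2) C

/-!
Covering `T_d(n)` needs `n` hyperplanes, by induction on `n` and then on `d`. Let `e = e₀` and
translate a cover of `T_d(n+1)` by `-e`; it then covers `T_d(n)`, because `T_d(n) + e ⊆ T_d(n+1)`.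
If one translated hyperplane misses `T_d(n)`, the others cover it, and we are done by induction
on `n`. Otherwise every hyperplane meets `T_d(n) + e`, so none of them is the face `x₀ = 0`;
intersecting with that face turns the cover into a cover of `T_{d-1}(n+1)` of no larger size,
and we are done by induction on `d`. In dimension `0` there is no hyperplane to cover the point.
-/

open Matrix

section Grid

variable {d n : ℕ}

lemma toReal_add (x y : Fin d → ℤ) : toReal (x + y) = toReal x + toReal y := by
  ext i
  simp [toReal]

lemma toReal_cons (a : ℤ) (y : Fin d → ℤ) :
    toReal (Fin.cons a y : Fin (d + 1) → ℤ) = Fin.cons (a : ℝ) (toReal y) := by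
  ext i
  cases i using Fin.cases <;> rfl

lemma dotProduct_toReal_single (a : Fin d → ℝ) (i : Fin d) :
    a ⬝ᵥ toReal (Pi.single i 1) = a i := by
  simp [toReal, dotProduct, Pi.single_apply]

lemma dotProduct_eq_head_add_tail (a p : Fin (d + 1) → ℝ) :
    a ⬝ᵥ p = a 0 * p 0 + Fin.tail a ⬝ᵥ Fin.tail p :=
  Fin.sum_univ_succ _

lemma zero_mem_triGrid : (0 : Fin d → ℤ) ∈ TriGrid d (n + 1) := by
  simp [TriGrid]

lemma le_of_mem_triGrid {x : Fin d → ℤ} (hx : x ∈ TriGrid d n) (i : Fin d) : x i ≤ n - 1 :=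
  (Finset.single_le_sum (fun j _ => hx.1 j) (Finset.mem_univ i)).trans hx.2

lemma add_single_mem_triGrid {y : Fin d → ℤ} (hy : y ∈ TriGrid d n) (i : Fin d) :
    y + Pi.single i 1 ∈ TriGrid d (n + 1) := by
  refine ⟨fun j => add_nonneg (hy.1 j) ?_, ?_⟩
  · rw [Pi.single_apply]
    split_ifs <;> simp
  · simp only [Pi.add_apply, Finset.sum_add_distrib, Finset.sum_pi_single', Finset.mem_univ,
      if_true]
    push_cast
    linarith [hy.2]

lemma cons_zero_mem_triGrid {y : Fin d → ℤ} (hy : y ∈ TriGrid d n) :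
    (Fin.cons 0 y : Fin (d + 1) → ℤ) ∈ TriGrid (d + 1) n := by
  refine ⟨fun i => ?_, ?_⟩
  · cases i using Fin.cases
    · exact le_rfl
    · exact hy.1 _
  · simpa [Fin.sum_univ_succ] using hy.2

end Grid

def IsCover {d : ℕ} (C : Multiset ((Fin d → ℝ) × ℝ)) (S : Set (Fin d → ℤ)) : Prop :=
  ∀ x ∈ S, ∃ H ∈ C, H.1 ⬝ᵥ toReal x = H.2

namespace IsCover

variable {d : ℕ} {C : Multiset ((Fin d → ℝ) × ℝ)} {S T : Set (Fin d → ℤ)}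

lemma iff_one_le_hypCount : IsCover C S ↔ ∀ x ∈ S, 1 ≤ hypCount d C (toReal x) :=
  forall₂_congr fun _ _ => Multiset.countP_pos.symm

lemma erase (hC : IsCover C S) {H : (Fin d → ℝ) × ℝ} (hH : ∀ x ∈ S, H.1 ⬝ᵥ toReal x ≠ H.2) :
    IsCover (C.erase H) S := by
  intro x hx
  obtain ⟨K, hK, hKx⟩ := hC x hx
  have hKH : K ≠ H := by
    rintro rfl
    exact hH x hx hKx
  exact ⟨K, (Multiset.mem_erase_of_ne hKH).2 hK, hKx⟩

lemma filter (hC : IsCover C S) (P : (Fin d → ℝ) × ℝ → Prop) [DecidablePred P]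
    (hP : ∀ H ∈ C, ¬ P H → ∀ x ∈ S, H.1 ⬝ᵥ toReal x ≠ H.2) : IsCover (C.filter P) S := by
  intro x hx
  obtain ⟨K, hK, hKx⟩ := hC x hx
  by_cases hPK : P K
  · exact ⟨K, Multiset.mem_filter.2 ⟨hK, hPK⟩, hKx⟩
  · exact absurd hKx (hP K hK hPK x hx)

lemma translate (hC : IsCover C T) (v : Fin d → ℤ) (hv : ∀ y ∈ S, y + v ∈ T) :
    IsCover (C.map fun H => (H.1, H.2 - H.1 ⬝ᵥ toReal v)) S := by
  intro y hy
  obtain ⟨K, hK, hKy⟩ := hC (y + v) (hv y hy)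
  refine ⟨_, Multiset.mem_map_of_mem _ hK, ?_⟩
  rw [toReal_add, dotProduct_add] at hKy
  simp only
  linarith

lemma restrict {C : Multiset ((Fin (d + 1) → ℝ) × ℝ)} {T : Set (Fin (d + 1) → ℤ)}
    (hC : IsCover C T) (hS : ∀ y ∈ S, (Fin.cons 0 y : Fin (d + 1) → ℤ) ∈ T) :
    IsCover (C.map fun H => (Fin.tail H.1, H.2)) S := by
  intro y hy
  obtain ⟨K, hK, hKy⟩ := hC _ (hS y hy)
  refine ⟨_, Multiset.mem_map_of_mem _ hK, ?_⟩
  rw [dotProduct_eq_head_add_tail, toReal_cons] at hKy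
  simpa using hKy

end IsCover

lemma dotProduct_toReal_add_head_ne_zero {d : ℕ} {a : Fin (d + 1) → ℝ} (ha : a ≠ 0)
    (htail : Fin.tail a = 0) {x : Fin (d + 1) → ℤ} (hx : 0 ≤ x 0) :
    a ⬝ᵥ toReal x + a 0 ≠ 0 := by
  have ha0 : a 0 ≠ 0 := fun h0 => ha (funext fun j => Fin.cases h0 (congrFun htail) j)
  have hx' : (0 : ℝ) ≤ toReal x 0 := Int.cast_nonneg hx
  rw [dotProduct_eq_head_add_tail, htail, zero_dotProduct, add_zero, ← mul_add_one]
  exact mul_ne_zero ha0 (by linarith)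

lemma IsCover.face_of_forall_meet_shift {d n : ℕ} {C : Multiset ((Fin (d + 1) → ℝ) × ℝ)}
    (hproper : ∀ H ∈ C, H.1 ≠ 0) (hC : IsCover C (TriGrid (d + 1) (n + 1)))
    (hmeet : ∀ H ∈ C, ∃ x ∈ TriGrid (d + 1) n, H.1 ⬝ᵥ toReal x + H.1 0 = H.2) :
    IsCover ((C.map fun H => (Fin.tail H.1, H.2)).filter fun H => H.1 ≠ 0) (TriGrid d (n + 1)) := by
  refine (hC.restrict fun y hy => cons_zero_mem_triGrid hy).filter _ ?_
  simp only [Multiset.mem_map, not_not]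
  rintro _ ⟨H, hH, rfl⟩ htail y - hHy
  obtain ⟨x, hx, hHx⟩ := hmeet H hH
  simp only at htail hHy
  rw [htail, zero_dotProduct] at hHy
  exact dotProduct_toReal_add_head_ne_zero (hproper H hH) htail (hx.1 0) (by linarith)

theorem le_card_of_isCover : ∀ (n d : ℕ) (C : Multiset ((Fin d → ℝ) × ℝ)),
    (∀ H ∈ C, H.1 ≠ 0) → IsCover C (TriGrid d n) → n ≤ Multiset.card C
  | 0, _, _, _, _ => Nat.zero_le _
  | n + 1, 0, C, hproper, hC => by
    obtain ⟨H, hH, -⟩ := hC 0 zero_mem_triGrid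
    exact absurd (Subsingleton.elim _ _) (hproper H hH)
  | n + 1, d + 1, C, hproper, hC => by
    set C' := C.map fun H => (H.1, H.2 - H.1 ⬝ᵥ toReal (Pi.single 0 1)) with hC'
    have hC'cover : IsCover C' (TriGrid (d + 1) n) :=
      hC.translate _ fun y hy => add_single_mem_triGrid hy 0
    by_cases hmiss : ∃ H ∈ C', ∀ x ∈ TriGrid (d + 1) n, H.1 ⬝ᵥ toReal x ≠ H.2
    · obtain ⟨H, hH, hHmiss⟩ := hmiss
      have hC'proper : ∀ K ∈ C'.erase H, K.1 ≠ 0 := by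
        intro K hK
        obtain ⟨K₀, hK₀, rfl⟩ := Multiset.mem_map.1 (Multiset.mem_of_mem_erase hK)
        exact hproper K₀ hK₀
      have hcard := le_card_of_isCover n (d + 1) _ hC'proper (hC'cover.erase hHmiss)
      have hpos : 0 < Multiset.card C' := Multiset.card_pos_iff_exists_mem.2 ⟨H, hH⟩
      rw [Multiset.card_erase_of_mem hH, Nat.pred_eq_sub_one] at hcard
      rw [hC', Multiset.card_map] at hcard hpos
      omega
    · push Not at hmiss
      have hmeet : ∀ H ∈ C, ∃ x ∈ TriGrid (d + 1) n, H.1 ⬝ᵥ toReal x + H.1 0 = H.2 := by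
        intro H hH
        obtain ⟨x, hx, hHx⟩ := hmiss _ (Multiset.mem_map_of_mem _ hH)
        rw [dotProduct_toReal_single] at hHx
        exact ⟨x, hx, by linarith⟩
      set D := (C.map fun H => (Fin.tail H.1, H.2)).filter fun H => H.1 ≠ 0
      calc n + 1 ≤ Multiset.card D :=
            le_card_of_isCover (n + 1) d D (fun H hH => (Multiset.mem_filter.1 hH).2)
              (hC.face_of_forall_meet_shift hproper hmeet)
        _ ≤ Multiset.card C :=
            (Multiset.card_le_card (Multiset.filter_le _ _)).trans_eq (Multiset.card_map _ _)

theorem exists_isCover_card_eq {d : ℕ} (i : Fin d) (n : ℕ) :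
    ∃ C : Multiset ((Fin d → ℝ) × ℝ), Multiset.card C = n ∧ (∀ H ∈ C, H.1 ≠ 0) ∧
      IsCover C (TriGrid d n) := by
  refine ⟨(Multiset.range n).map fun k : ℕ => (Pi.single i 1, (k : ℝ)), by simp, ?_, ?_⟩
  · simp
  · intro x hx
    have hxi : (x i).toNat < n := by have := le_of_mem_triGrid hx i; have := hx.1 i; omega
    refine ⟨_, Multiset.mem_map_of_mem _ (Multiset.mem_range.2 hxi), ?_⟩
    rw [single_dotProduct, one_mul]
    show (x i : ℝ) = ((x i).toNat : ℝ)
    exact_mod_cast (Int.toNat_of_nonneg (hx.1 i)).symm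

theorem stmt1_general (d n : ℕ) (hd : 1 ≤ d) :
    (∃ C : Multiset ((Fin d → ℝ) × ℝ),
      Multiset.card C = n ∧ (∀ H ∈ C, H.1 ≠ 0) ∧
      (∀ x ∈ TriGrid d n, 1 ≤ hypCount d C (toReal x))) ∧
    (∀ C : Multiset ((Fin d → ℝ) × ℝ),
      (∀ H ∈ C, H.1 ≠ 0) →
      (∀ x ∈ TriGrid d n, 1 ≤ hypCount d C (toReal x)) →
      n ≤ Multiset.card C) := by
  constructor
  · obtain ⟨C, hcard, hproper, hC⟩ := exists_isCover_card_eq ⟨0, hd⟩ n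
    exact ⟨C, hcard, hproper, IsCover.iff_one_le_hypCount.1 hC⟩
  · exact fun C hproper hC => le_card_of_isCover n d C hproper (IsCover.iff_one_le_hypCount.2 hC)

theorem stmt1 (d n : ℕ) (hd : 1 ≤ d) (hn : 1 ≤ n) :
    (∃ C : Multiset ((Fin d → ℝ) × ℝ),
      Multiset.card C = n ∧ (∀ H ∈ C, H.1 ≠ 0) ∧
      (∀ x ∈ TriGrid d n, 1 ≤ hypCount d C (toReal x))) ∧
    (∀ C : Multiset ((Fin d → ℝ) × ℝ),
      (∀ H ∈ C, H.1 ≠ 0) →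
      (∀ x ∈ TriGrid d n, 1 ≤ hypCount d C (toReal x)) →
      n ≤ Multiset.card C) :=
  stmt1_general d n hd
end

section
/- For every integer j ≥ 1, the weight assignment on T_2(3j+1) giving the lines x = i, y = i, and x + y = 3j − i weight (2j−i)/(3j) for each i ∈ {0,…,2j−1} (and weight 0 to all other lines) is a fractional cover of total weight 2j+1. -/
/-!
Write `w t = (2j - t)/(3j)`, so that the line `x = i`, `y = i` or `x + y = 3j - i` has weight
`w i` when `i < 2j` and `0` otherwise. Since `w i ≤ 0` for `i ≥ 2j`, a grid point `(a, b)`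
receives weight at least `w a + w b + w c` with `c = 3j - a - b ≥ 0`, and as `w` is affine and
`a + b + c = 3j`, this sum is exactly `1`.
-/

open Finset

lemma le_sum_range_ite_eq (g : ℝ → ℝ) {n : ℕ} {x : ℤ} (hx : 0 ≤ x)
    (hg : ∀ i : ℕ, n ≤ i → g i ≤ 0) :
    g x ≤ ∑ i ∈ range n, if x = (i : ℤ) then g i else 0 := by
  lift x to ℕ using hx with m
  simp only [Nat.cast_inj, sum_ite_eq, mem_range, Int.cast_natCast]
  split_ifs with hm
  · exact le_rfl
  · exact hg m (not_lt.mp hm)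

lemma one_le_sum_weight_of_mem_triGrid {j : ℕ} (hj : 1 ≤ j) {x : Fin 2 → ℤ}
    (hx : x ∈ TriGrid 2 (3 * j + 1)) :
    1 ≤ ∑ i ∈ range (2 * j),
        ((if x 0 = (i : ℤ) then (2 * (j : ℝ) - i) / (3 * j) else 0) +
         (if x 1 = (i : ℤ) then (2 * (j : ℝ) - i) / (3 * j) else 0) +
         (if x 0 + x 1 = 3 * (j : ℤ) - i then (2 * (j : ℝ) - i) / (3 * j) else 0)) := by
  obtain ⟨hnonneg, hsum⟩ := hx
  have hle : x 0 + x 1 ≤ 3 * j := by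
    rw [Fin.sum_univ_two] at hsum
    push_cast at hsum
    linarith
  set w : ℝ → ℝ := fun t => (2 * (j : ℝ) - t) / (3 * j)
  have hw : ∀ i : ℕ, 2 * j ≤ i → w i ≤ 0 := fun i hi => by
    have : (2 * j : ℝ) ≤ i := by exact_mod_cast hi
    exact div_nonpos_of_nonpos_of_nonneg (by linarith) (by positivity)
  have hline : ∀ i : ℕ, x 0 + x 1 = 3 * (j : ℤ) - i ↔ 3 * j - (x 0 + x 1) = (i : ℤ) := by
    intro i; omega
  simp only [hline, sum_add_distrib]
  have hj0 : (j : ℝ) ≠ 0 := Nat.cast_ne_zero.mpr (by omega)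
  calc (1 : ℝ) = w (x 0) + w (x 1) + w ((3 * j - (x 0 + x 1) : ℤ) : ℝ) := by
        simp only [w]; field_simp; push_cast; ring
    _ ≤ _ := by
      gcongr
      · exact le_sum_range_ite_eq w (hnonneg 0) hw
      · exact le_sum_range_ite_eq w (hnonneg 1) hw
      · exact le_sum_range_ite_eq w (sub_nonneg.mpr hle) hw

lemma sum_weight_eq {j : ℕ} (hj : 1 ≤ j) :
    ∑ i ∈ range (2 * j), 3 * ((2 * (j : ℝ) - i) / (3 * j)) = 2 * (j : ℝ) + 1 := by
  have hj0 : (j : ℝ) ≠ 0 := Nat.cast_ne_zero.mpr (by omega)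
  have hgauss : (∑ i ∈ range (2 * j), (i : ℝ)) * 2 = 2 * j * (2 * j - 1) := by
    have h := congrArg (Nat.cast : ℕ → ℝ) (sum_range_id_mul_two (2 * j))
    push_cast [Nat.cast_sub (by omega : 1 ≤ 2 * j)] at h
    exact h
  rw [← mul_sum, ← sum_div, sum_sub_distrib, sum_const, card_range, nsmul_eq_mul]
  field_simp
  push_cast
  linarith

/-- The explicit weight assignment: for each `i ∈ {0, …, 2j-1}`, the lines `x = i`, `y = i`
and `x + y = 3j - i` each receive weight `(2j - i)/(3j)`; all other lines get weight 0.
This is a fractional cover of `T_2(3j+1)` of total weight `2j+1`: the total weight of lines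
through any grid point is at least `1`, and the sum of all weights equals `2j+1`. -/
theorem stmt8 (j : ℕ) (hj : 1 ≤ j) :
    (∀ x ∈ TriGrid 2 (3 * j + 1),
      1 ≤ ∑ i ∈ Finset.range (2 * j),
        ((if x 0 = (i : ℤ) then (2 * (j : ℝ) - i) / (3 * j) else 0) +
         (if x 1 = (i : ℤ) then (2 * (j : ℝ) - i) / (3 * j) else 0) +
         (if x 0 + x 1 = 3 * (j : ℤ) - i then (2 * (j : ℝ) - i) / (3 * j) else 0))) ∧
    (∑ i ∈ Finset.range (2 * j), 3 * ((2 * (j : ℝ) - i) / (3 * j))) = 2 * (j : ℝ) + 1 :=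
  ⟨fun _ hx => one_le_sum_weight_of_mem_triGrid hj hx, sum_weight_eq hj⟩
end

section
/- For every d ≥ 1 and n ≥ 1, with q and r defined by n + ⌈n/d⌉ = q(d+1) + r, 0 ≤ r < d+1, the following multiset of n + ⌈n/d⌉ hyperplanes covers every point of T_d(n) at least twice: x_i = j for 1 ≤ i ≤ r and 0 ≤ j ≤ q; x_i = j for r+1 ≤ i ≤ d and 0 ≤ j ≤ q−1; and x_1+⋯+x_d = n−1−j for 0 ≤ j ≤ q−1. -/
open scoped Classical

/-- `n + ⌈n/d⌉`. -/
def N13 (n d : ℕ) : ℕ := n + (n + d - 1) / d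

/-- `q` with `n + ⌈n/d⌉ = q(d+1) + r`, `0 ≤ r < d+1`. -/
def q13 (n d : ℕ) : ℕ := N13 n d / (d + 1)

/-- `r` with `n + ⌈n/d⌉ = q(d+1) + r`, `0 ≤ r < d+1`. -/
def r13 (n d : ℕ) : ℕ := N13 n d % (d + 1)

/-- The explicit 2-cover: hyperplanes `x_i = j` for the first `r` coordinates and
`0 ≤ j ≤ q`, hyperplanes `x_i = j` for the remaining coordinates and `0 ≤ j ≤ q - 1`,
and hyperplanes `x_1 + ⋯ + x_d = n - 1 - j` for `0 ≤ j ≤ q - 1`. -/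
noncomputable def cover13 (n d : ℕ) : Multiset ((Fin d → ℝ) × ℝ) :=
  (((Finset.univ : Finset (Fin d)) ×ˢ Finset.range (q13 n d + 1)).filter
      (fun ij => (ij.1 : ℕ) < r13 n d)).val.map
    (fun ij => (Pi.single ij.1 (1 : ℝ), (ij.2 : ℝ))) +
  (((Finset.univ : Finset (Fin d)) ×ˢ Finset.range (q13 n d)).filter
      (fun ij => r13 n d ≤ (ij.1 : ℕ))).val.map
    (fun ij => (Pi.single ij.1 (1 : ℝ), (ij.2 : ℝ))) +
  (Finset.range (q13 n d)).val.map
    (fun j => ((fun _ => (1 : ℝ)), (n : ℝ) - 1 - (j : ℝ)))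


/-!
Give coordinate `i` the bound `t i = q + 1` for `i < r` and `t i = q` otherwise. A point `x ≥ 0`
lies on exactly `#{i | x i < t i}` coordinate hyperplanes of the cover, and
`∑ t = d q + r = n + c - q` with `c = ⌈n/d⌉`. Every `t i` is at most `c`, so if only `k` coordinates
satisfy `x i < t i`, then `∑ x ≥ ∑ t - k c`. For `x ∈ T_d(n)`, where `∑ x ≤ n - 1`, this rules out
`k = 0`, and for `k = 1` it gives `∑ x ≥ n - q`, so that `x` also lies on one of the hyperplanes
`x_1 + ⋯ + x_d = n - 1 - j` with `j < q`.
-/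

open Finset

noncomputable def coordHyperplanes {d : ℕ} (s : Finset (Fin d × ℕ)) :
    Multiset ((Fin d → ℝ) × ℝ) :=
  s.val.map fun ij => (Pi.single ij.1 1, (ij.2 : ℝ))

noncomputable def levelHyperplanes (d n q : ℕ) : Multiset ((Fin d → ℝ) × ℝ) :=
  (range q).val.map fun j : ℕ => (fun _ => 1, (n : ℝ) - 1 - j)

-- Not `rfl`: in `cover13` the index `j` of the last family is cast to `ℝ` through the
-- `Multiset` monad before the map is applied.
lemma cover13_eq (n d : ℕ) :
    cover13 n d =
      coordHyperplanes {ij ∈ univ ×ˢ range (q13 n d + 1) | (ij.1 : ℕ) < r13 n d} +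
      coordHyperplanes {ij ∈ univ ×ˢ range (q13 n d) | r13 n d ≤ (ij.1 : ℕ)} +
      levelHyperplanes d n (q13 n d) := by
  simp only [cover13, levelHyperplanes, coordHyperplanes, bind, Multiset.pure_def,
    Multiset.bind_singleton, Multiset.map_map, Function.comp_def]

lemma hypCount_add {d : ℕ} (C D : Multiset ((Fin d → ℝ) × ℝ)) (p : Fin d → ℝ) :
    hypCount d (C + D) p = hypCount d C p + hypCount d D p :=
  Multiset.countP_add _ _ _

lemma hypCount_coordHyperplanes {d : ℕ} (s : Finset (Fin d × ℕ)) (x : Fin d → ℤ) :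
    hypCount d (coordHyperplanes s) (toReal x) = #{ij ∈ s | x ij.1 = ij.2} := by
  rw [hypCount, coordHyperplanes, Multiset.countP_map, card_def, filter_val]
  congr 1
  refine Multiset.filter_congr fun ij _ => ?_
  simp only [toReal, Pi.single_apply, ite_mul, one_mul, zero_mul, sum_ite_eq', mem_univ, if_true]
  norm_cast

lemma card_filter_prod_range_eq_card_filter_lt {d : ℕ} (P : Fin d → Prop) [DecidablePred P]
    (m : ℕ) {x : Fin d → ℤ} (hx : ∀ i, 0 ≤ x i) :
    #{ij ∈ univ ×ˢ range m | P ij.1 ∧ x ij.1 = ij.2} = #{i | P i ∧ x i < m} := by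
  refine card_nbij' Prod.fst (fun i => (i, (x i).toNat)) ?_ ?_ ?_ fun _ _ => rfl
  · rintro ⟨i, j⟩ hij
    simp only [mem_coe, mem_filter, mem_product, mem_univ, true_and, mem_range] at hij ⊢
    exact ⟨hij.2.1, by omega⟩
  · intro i hi
    simp only [mem_coe, mem_filter, mem_product, mem_univ, true_and, mem_range] at hi ⊢
    have := hx i
    exact ⟨by omega, hi.1, by omega⟩
  · rintro ⟨i, j⟩ hij
    simp only [mem_coe, mem_filter, mem_product, mem_univ, true_and, mem_range] at hij
    simp [hij.2.2]

lemma one_le_hypCount_levelHyperplanes {d n q : ℕ} {x : Fin d → ℤ}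
    (hlow : (n : ℤ) - q ≤ ∑ i, x i) (hhigh : ∑ i, x i ≤ n - 1) :
    1 ≤ hypCount d (levelHyperplanes d n q) (toReal x) := by
  have hj : (((n - 1 - ∑ i, x i).toNat : ℕ) : ℝ) = n - 1 - ∑ i, (x i : ℝ) := by
    exact_mod_cast Int.toNat_of_nonneg (show 0 ≤ (n : ℤ) - 1 - ∑ i, x i by omega)
  refine Multiset.countP_pos.mpr ⟨_, Multiset.mem_map_of_mem _
    (mem_range.mpr (show (n - 1 - ∑ i, x i).toNat < q by omega)), ?_⟩
  simp only [one_mul, toReal]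
  rw [hj]
  ring

lemma sum_le_sum_add_card_filter_lt_mul {ι : Type*} [Fintype ι] {x t : ι → ℤ} {c : ℤ}
    (hx : ∀ i, 0 ≤ x i) (ht : ∀ i, t i ≤ c) :
    ∑ i, t i ≤ ∑ i, x i + #{i | x i < t i} * c := by
  have hlow : ∑ i ∈ {i | x i < t i}, t i ≤ #{i | x i < t i} * c := by
    simpa using sum_le_card_nsmul _ _ c fun i _ => ht i
  have hhigh : ∑ i ∈ {i | ¬ x i < t i}, t i ≤ ∑ i, x i :=
    calc ∑ i ∈ {i | ¬ x i < t i}, t i ≤ ∑ i ∈ {i | ¬ x i < t i}, x i :=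
          sum_le_sum fun i hi => not_lt.mp (mem_filter.mp hi).2
      _ ≤ ∑ i, x i := sum_le_sum_of_subset_of_nonneg (filter_subset _ _) fun i _ _ => hx i
  rw [← sum_filter_add_sum_filter_not univ (fun i => x i < t i) t]
  linarith

lemma r13_le (n d : ℕ) : r13 n d ≤ d := Nat.lt_succ_iff.mp (Nat.mod_lt _ d.succ_pos)

lemma succ_mul_q13_add_r13 (n d : ℕ) : (d + 1) * q13 n d + r13 n d = N13 n d :=
  Nat.div_add_mod _ _

lemma le_mul_add_sub_one_div (n : ℕ) {d : ℕ} (hd : 0 < d) : n ≤ d * ((n + d - 1) / d) := by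
  have := Nat.div_add_mod (n + d - 1) d
  have := Nat.mod_lt (n + d - 1) hd
  omega

lemma q13_le_ceil (n : ℕ) {d : ℕ} (hd : 0 < d) : q13 n d ≤ (n + d - 1) / d := by
  have := succ_mul_q13_add_r13 n d
  have := le_mul_add_sub_one_div n hd
  unfold N13 at *
  nlinarith

def coordBound13 (n d : ℕ) (i : Fin d) : ℕ :=
  if (i : ℕ) < r13 n d then q13 n d + 1 else q13 n d

lemma coordBound13_le_ceil (n : ℕ) {d : ℕ} (hd : 0 < d) (i : Fin d) :
    coordBound13 n d i ≤ (n + d - 1) / d := by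
  have := succ_mul_q13_add_r13 n d
  have := le_mul_add_sub_one_div n hd
  have := q13_le_ceil n hd
  unfold N13 coordBound13 at *
  split_ifs with hi
  · -- `q = c` would give `d c + r = n ≤ d c`.
    nlinarith
  · exact this

lemma sum_coordBound13 (n d : ℕ) : ∑ i, coordBound13 n d i = d * q13 n d + r13 n d := by
  have : ∀ i : Fin d, coordBound13 n d i = q13 n d + if (i : ℕ) < r13 n d then 1 else 0 := by
    intro i
    unfold coordBound13
    split_ifs <;> rfl
  simp only [this, sum_add_distrib, sum_const, card_univ, Fintype.card_fin, smul_eq_mul, sum_boole,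
    Fin.card_filter_val_lt, min_eq_right (r13_le n d), Nat.cast_id]

lemma card_cover13 (n d : ℕ) : Multiset.card (cover13 n d) = N13 n d := by
  have hlt : #{i : Fin d | (i : ℕ) < r13 n d} = r13 n d := by
    rw [Fin.card_filter_val_lt, min_eq_right (r13_le n d)]
  have hge : #{i : Fin d | r13 n d ≤ (i : ℕ)} = d - r13 n d := by
    have := card_filter_add_card_filter_not (s := (univ : Finset (Fin d)))
      (fun i => (i : ℕ) < r13 n d)
    simp only [not_lt, hlt, card_univ, Fintype.card_fin] at this
    omega
  rw [cover13_eq, Multiset.card_add, Multiset.card_add, coordHyperplanes, coordHyperplanes,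
    levelHyperplanes, Multiset.card_map, Multiset.card_map, Multiset.card_map, ← card_def,
    ← card_def, ← card_def, filter_product_left (fun i : Fin d => (i : ℕ) < r13 n d),
    filter_product_left (fun i : Fin d => r13 n d ≤ (i : ℕ)), card_product, card_product,
    hlt, hge, card_range, card_range, ← succ_mul_q13_add_r13]
  zify [r13_le n d]
  ring

lemma hypCount_cover13 (n : ℕ) {d : ℕ} {x : Fin d → ℤ} (hx : ∀ i, 0 ≤ x i) :
    hypCount d (cover13 n d) (toReal x) =
      #{i | x i < coordBound13 n d i} + hypCount d (levelHyperplanes d n (q13 n d)) (toReal x) := by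
  rw [cover13_eq, hypCount_add, hypCount_add, hypCount_coordHyperplanes,
    hypCount_coordHyperplanes, filter_filter, filter_filter,
    card_filter_prod_range_eq_card_filter_lt (fun i => (i : ℕ) < r13 n d) _ hx,
    card_filter_prod_range_eq_card_filter_lt (fun i => r13 n d ≤ (i : ℕ)) _ hx,
    ← card_filter_add_card_filter_not (s := {i | x i < coordBound13 n d i})
      (fun i => (i : ℕ) < r13 n d), filter_filter, filter_filter]
  congr 3 <;> ext i <;> by_cases hi : (i : ℕ) < r13 n d <;> simp [coordBound13, hi] <;> omega

theorem stmt13_general (d n : ℕ) (hd : 1 ≤ d) :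
    Multiset.card (cover13 n d) = N13 n d ∧
    (∀ x ∈ TriGrid d n, 2 ≤ hypCount d (cover13 n d) (toReal x)) := by
  refine ⟨card_cover13 n d, fun x ⟨hx, hsum⟩ => ?_⟩
  rw [hypCount_cover13 n hx]
  have hcount := sum_le_sum_add_card_filter_lt_mul hx
    fun i => Int.ofNat_le.mpr (coordBound13_le_ceil n hd i)
  have hq := q13_le_ceil n hd
  have hN : ∑ i, coordBound13 n d i + q13 n d = n + (n + d - 1) / d := by
    rw [sum_coordBound13, ← N13, ← succ_mul_q13_add_r13]
    ring
  rw [← Nat.cast_sum] at hcount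
  generalize (n + d - 1) / d = c at *
  generalize #{i | x i < coordBound13 n d i} = k at *
  obtain hk | hk | hk : k = 0 ∨ k = 1 ∨ 2 ≤ k := by omega
  · subst hk
    omega
  · subst hk
    have := one_le_hypCount_levelHyperplanes (q := q13 n d) (by omega) hsum
    omega
  · omega

theorem stmt13 (d n : ℕ) (hd : 1 ≤ d) (hn : 1 ≤ n) :
    Multiset.card (cover13 n d) = N13 n d ∧
    (∀ x ∈ TriGrid d n, 2 ≤ hypCount d (cover13 n d) (toReal x)) :=
  stmt13_general d n hd
end

section
/- For every d ≥ 1, the minimum total weight of a fractional hyperplane cover of T_d(2) equals 1 + 1/d. -/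
open scoped Classical

/-- The total weight of a finitely-supported weight assignment on hyperplanes. -/
noncomputable def fracTotal {d : ℕ} (w : ((Fin d → ℝ) × ℝ) →₀ ℝ) : ℝ :=
  ∑ H ∈ w.support, w H

/-- The total weight of hyperplanes passing through the point `p`. -/
noncomputable def fracAt {d : ℕ} (w : ((Fin d → ℝ) × ℝ) →₀ ℝ) (p : Fin d → ℝ) : ℝ :=
  ∑ H ∈ w.support.filter (fun H => ∑ i, H.1 i * p i = H.2), w H

/-- `w` is a fractional cover of `T_d(n)`: nonnegative weights on genuine hyperplanes such that
every grid point lies on hyperplanes of total weight at least `1`. -/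
def IsFracCover (d n : ℕ) (w : ((Fin d → ℝ) × ℝ) →₀ ℝ) : Prop :=
  (∀ H, 0 ≤ w H) ∧ (∀ H ∈ w.support, H.1 ≠ 0) ∧
  ∀ x ∈ TriGrid d n, 1 ≤ fracAt w (toReal x)

/-!
The `d + 1` points of `T_d(2)` are the vertices of a simplex, hence affinely independent, so a
hyperplane contains at most `d` of them. Counting incidences between the vertices and the
hyperplanes of a fractional cover of total weight `t` gives `d + 1 ≤ d t`. Conversely, each vertex
lies on every facet hyperplane of the simplex except the opposite one, so weight `1 / d` on each of
the `d + 1` facets covers every vertex with weight exactly `1`.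
-/

section FractionalCover

variable {d : ℕ}

def OnHyperplane (H : (Fin d → ℝ) × ℝ) (p : Fin d → ℝ) : Prop :=
  ∑ i, H.1 i * p i = H.2

lemma fracAt_eq_sum (w : ((Fin d → ℝ) × ℝ) →₀ ℝ) (p : Fin d → ℝ) :
    fracAt w p = w.sum fun H v => if OnHyperplane H p then v else 0 := by
  rw [fracAt, Finset.sum_filter, Finsupp.sum]
  rfl

lemma fracTotal_eq_sum (w : ((Fin d → ℝ) × ℝ) →₀ ℝ) : fracTotal w = w.sum fun _ v => v := rfl

lemma fracTotal_sum_single {ι : Type*} (s : Finset ι) (H : ι → (Fin d → ℝ) × ℝ) (c : ι → ℝ) :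
    fracTotal (∑ l ∈ s, Finsupp.single (H l) (c l)) = ∑ l ∈ s, c l := by
  rw [fracTotal_eq_sum, ← Finsupp.sum_finsetSum_index (fun _ => rfl) (fun _ _ _ => rfl)]
  simp

lemma fracAt_sum_single {ι : Type*} (s : Finset ι) (H : ι → (Fin d → ℝ) × ℝ) (c : ι → ℝ)
    (p : Fin d → ℝ) :
    fracAt (∑ l ∈ s, Finsupp.single (H l) (c l)) p =
      ∑ l ∈ s, if OnHyperplane (H l) p then c l else 0 := by
  rw [fracAt_eq_sum, ← Finsupp.sum_finsetSum_index (fun _ => by simp)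
    (fun _ _ _ => by split_ifs <;> simp)]
  simp

open Finset in
lemma sum_fracAt_eq {ι : Type*} [Fintype ι] (w : ((Fin d → ℝ) × ℝ) →₀ ℝ) (p : ι → Fin d → ℝ) :
    ∑ k, fracAt w (p k) = ∑ H ∈ w.support, w H * #{k | OnHyperplane H (p k)} := by
  simp only [fracAt_eq_sum, Finsupp.sum]
  rw [sum_comm]
  refine sum_congr rfl fun H _ => ?_
  rw [← sum_filter, sum_const, nsmul_eq_mul, mul_comm]

open Finset in
lemma card_le_mul_fracTotal {m : ℕ} {ι : Type*} [Fintype ι] {w : ((Fin d → ℝ) × ℝ) →₀ ℝ}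
    {p : ι → Fin d → ℝ} (hw : ∀ H, 0 ≤ w H) (hcover : ∀ k, 1 ≤ fracAt w (p k))
    (hm : ∀ H ∈ w.support, #{k | OnHyperplane H (p k)} ≤ m) :
    (Fintype.card ι : ℝ) ≤ m * fracTotal w :=
  calc (Fintype.card ι : ℝ) = ∑ _k : ι, (1 : ℝ) := by simp
    _ ≤ ∑ k, fracAt w (p k) := sum_le_sum fun k _ => hcover k
    _ = ∑ H ∈ w.support, w H * #{k | OnHyperplane H (p k)} := sum_fracAt_eq w p
    _ ≤ ∑ H ∈ w.support, w H * m :=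
      sum_le_sum fun H hH => mul_le_mul_of_nonneg_left (by exact_mod_cast hm H hH) (hw H)
    _ = m * fracTotal w := by rw [fracTotal, ← sum_mul, mul_comm]

def simplexVertex : Option (Fin d) → Fin d → ℤ
  | none => 0
  | some i => Pi.single i 1

def simplexFacet : Option (Fin d) → (Fin d → ℝ) × ℝ
  | none => (fun _ => 1, 1)
  | some i => (Pi.single i 1, 0)

lemma simplexFacet_fst_ne_zero (hd : 1 ≤ d) (l : Option (Fin d)) : (simplexFacet l).1 ≠ 0 := by
  cases l with
  | none => exact fun h => one_ne_zero (congrFun h ⟨0, hd⟩)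
  | some i => simp [simplexFacet]

lemma onHyperplane_simplexVertex_none (H : (Fin d → ℝ) × ℝ) :
    OnHyperplane H (toReal (simplexVertex none)) ↔ H.2 = 0 := by
  simp [OnHyperplane, simplexVertex, toReal, eq_comm]

lemma onHyperplane_simplexVertex_some (H : (Fin d → ℝ) × ℝ) (j : Fin d) :
    OnHyperplane H (toReal (simplexVertex (some j))) ↔ H.1 j = H.2 := by
  simp [OnHyperplane, simplexVertex, toReal, Pi.single_apply]

lemma onHyperplane_simplexFacet_iff (k l : Option (Fin d)) :
    OnHyperplane (simplexFacet l) (toReal (simplexVertex k)) ↔ k ≠ l := by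
  cases k <;> cases l <;>
    simp [onHyperplane_simplexVertex_none, onHyperplane_simplexVertex_some, simplexFacet,
      Pi.single_apply, eq_comm]

lemma eq_zero_of_forall_onHyperplane_simplexVertex {H : (Fin d → ℝ) × ℝ}
    (h : ∀ k, OnHyperplane H (toReal (simplexVertex k))) : H.1 = 0 := by
  have hb := (onHyperplane_simplexVertex_none H).1 (h none)
  funext j
  rw [Pi.zero_apply, (onHyperplane_simplexVertex_some H j).1 (h (some j)), hb]

open Finset in
lemma card_onHyperplane_simplexVertex_le {H : (Fin d → ℝ) × ℝ} (hH : H.1 ≠ 0) :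
    #{k | OnHyperplane H (toReal (simplexVertex k))} ≤ d := by
  have hmiss : ∃ k ∈ univ, ¬OnHyperplane H (toReal (simplexVertex k)) := by
    by_contra! h
    exact hH (eq_zero_of_forall_onHyperplane_simplexVertex fun k => h k (mem_univ k))
  simpa [Nat.lt_succ_iff] using card_lt_card (filter_ssubset.2 hmiss)

lemma simplexVertex_mem_triGrid (k : Option (Fin d)) : simplexVertex k ∈ TriGrid d 2 := by
  cases k <;> simp [TriGrid, simplexVertex, Pi.single_apply, apply_ite]

lemma triGrid_two_eq_range : TriGrid d 2 = Set.range (simplexVertex (d := d)) := by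
  refine Set.Subset.antisymm (fun x ⟨hx0, hx1⟩ => ?_)
    (Set.range_subset_iff.2 simplexVertex_mem_triGrid)
  norm_num at hx1
  by_cases hzero : ∀ i, x i = 0
  · exact ⟨none, funext fun i => (hzero i).symm⟩
  push Not at hzero
  obtain ⟨j, hj⟩ := hzero
  have hrest : ∀ i, i ≠ j → x i = 0 := fun i hij => by
    have := Finset.add_le_sum (fun k _ => hx0 k) (Finset.mem_univ i) (Finset.mem_univ j) hij
    have := hx0 i
    have := hx0 j
    omega
  refine ⟨some j, funext fun i => ?_⟩
  by_cases hij : i = j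
  · subst hij
    have := Finset.single_le_sum (fun k _ => hx0 k) (Finset.mem_univ i)
    have := hx0 i
    rw [simplexVertex, Pi.single_eq_same]
    omega
  · simp [simplexVertex, hij, hrest i hij]

lemma add_one_le_mul_fracTotal {w : ((Fin d → ℝ) × ℝ) →₀ ℝ} (hw : IsFracCover d 2 w) :
    (d : ℝ) + 1 ≤ d * fracTotal w := by
  obtain ⟨hw0, hwne, hcover⟩ := hw
  simpa using card_le_mul_fracTotal (p := fun k => toReal (simplexVertex k)) hw0
    (fun k => hcover _ (simplexVertex_mem_triGrid k))
    (fun H hH => card_onHyperplane_simplexVertex_le (hwne H hH))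

variable (d) in
noncomputable def simplexFacetCover : ((Fin d → ℝ) × ℝ) →₀ ℝ :=
  ∑ l, Finsupp.single (simplexFacet l) (1 / (d : ℝ))

lemma fracTotal_simplexFacetCover : fracTotal (simplexFacetCover d) = ((d : ℝ) + 1) / d := by
  rw [simplexFacetCover, fracTotal_sum_single]
  simp [div_eq_mul_inv]

lemma fracAt_simplexFacetCover (hd : 1 ≤ d) (k : Option (Fin d)) :
    fracAt (simplexFacetCover d) (toReal (simplexVertex k)) = 1 := by
  rw [simplexFacetCover, fracAt_sum_single]
  simp only [onHyperplane_simplexFacet_iff]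
  have hd0 : (d : ℝ) ≠ 0 := Nat.cast_ne_zero.2 (by omega)
  simp [Finset.sum_ite, Finset.filter_ne, hd0]

lemma isFracCover_simplexFacetCover (hd : 1 ≤ d) : IsFracCover d 2 (simplexFacetCover d) := by
  refine ⟨fun H => ?_, fun H hH => ?_, fun x hx => ?_⟩
  · exact (Finset.sum_nonneg fun l _ => Finsupp.single_nonneg.2 (by positivity) :
      0 ≤ simplexFacetCover d) H
  · obtain ⟨l, -, hl⟩ := Finset.mem_biUnion.1 (Finsupp.support_finsetSum hH)
    rw [Finset.mem_singleton.1 (Finsupp.support_single_subset hl)]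
    exact simplexFacet_fst_ne_zero hd l
  · obtain ⟨k, rfl⟩ := (triGrid_two_eq_range ▸ hx : x ∈ Set.range simplexVertex)
    exact (fracAt_simplexFacetCover hd k).ge

end FractionalCover

theorem stmt16 (d : ℕ) (hd : 1 ≤ d) :
    (∃ w : ((Fin d → ℝ) × ℝ) →₀ ℝ,
      IsFracCover d 2 w ∧ fracTotal w = 1 + 1 / (d : ℝ)) ∧
    (∀ w : ((Fin d → ℝ) × ℝ) →₀ ℝ,
      IsFracCover d 2 w → 1 + 1 / (d : ℝ) ≤ fracTotal w) := by
  have hd0 : (0 : ℝ) < d := by positivity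
  rw [one_add_div hd0.ne']
  refine ⟨⟨simplexFacetCover d, isFracCover_simplexFacetCover hd, fracTotal_simplexFacetCover⟩,
    fun w hw => ?_⟩
  rw [div_le_iff₀ hd0, mul_comm]
  exact add_one_le_mul_fracTotal hw
end
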